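/- arXiv:1709.03062 — 8 statements merged into one kernel-verified Lean document; each statement's English description precedes it below -/
import Mathlib

section
/- Let μ > 0 and a ∈ ℝⁿ. For all x ∈ ℝⁿ, the smooth approximation φ_μ satisfies φ_μ(x) ≤ φ(x) ≤ φ_μ(x) + (μ/2)·‖F‖², where ‖F‖ = sup{‖q‖ : q ∈ F}. -/
open scoped RealInnerProductSpace

lemma key_identity {n : ℕ} (μ : ℝ) (hμ : 0 < μ) (z q : EuclideanSpace ℝ (Fin n)) :
    (1 / (2 * μ)) * ‖z‖ ^ 2 - (μ / 2) * ‖μ⁻¹ • z - q‖ ^ 2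
      = ⟪z, q⟫ - (μ / 2) * ‖q‖ ^ 2 := by
  have h1 : ‖μ⁻¹ • z - q‖ ^ 2 = ‖μ⁻¹ • z‖ ^ 2 - 2 * ⟪μ⁻¹ • z, q⟫ + ‖q‖ ^ 2 := by
    rw [@norm_sub_sq_real]
  have h2 : ⟪μ⁻¹ • z, q⟫ = μ⁻¹ * ⟪z, q⟫ := real_inner_smul_left z q μ⁻¹
  have h3 : ‖μ⁻¹ • z‖ = μ⁻¹ * ‖z‖ := by
    rw [norm_smul, Real.norm_eq_abs, abs_of_pos (inv_pos.mpr hμ)]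
  rw [h1, h2, h3]
  field_simp
  ring

theorem stmt_0 {n : ℕ} (F : Set (EuclideanSpace ℝ (Fin n)))
    (hF : F.Nonempty) (hFc : IsClosed F) (hFb : Bornology.IsBounded F)
    (hFconv : Convex ℝ F) (hF0 : (0 : EuclideanSpace ℝ (Fin n)) ∈ interior F)
    (μ : ℝ) (hμ : 0 < μ) (a : EuclideanSpace ℝ (Fin n))
    (x : EuclideanSpace ℝ (Fin n)) :
    (1 / (2 * μ)) * ‖x - a‖ ^ 2 - (μ / 2) * (Metric.infDist (μ⁻¹ • (x - a)) F) ^ 2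
        ≤ sSup ((fun y => ⟪x - a, y⟫) '' F) ∧
      sSup ((fun y => ⟪x - a, y⟫) '' F)
        ≤ (1 / (2 * μ)) * ‖x - a‖ ^ 2 - (μ / 2) * (Metric.infDist (μ⁻¹ • (x - a)) F) ^ 2
            + (μ / 2) * (sSup (norm '' F)) ^ 2 := by
  set z := x - a with hz
  set w := μ⁻¹ • z with hw
  obtain ⟨r, hr⟩ := hFb.subset_closedBall 0
  have hnormle : ∀ q ∈ F, ‖q‖ ≤ r := fun q hq => by
    simpa using mem_closedBall_zero_iff.mp (hr hq)
  have hbddnorm : BddAbove (norm '' F) := ⟨r, fun b ⟨q, hq, hb⟩ => hb ▸ hnormle q hq⟩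
  have hbddinner : BddAbove ((fun y => ⟪z, y⟫) '' F) := by
    refine ⟨‖z‖ * r, fun b ⟨q, hq, hb⟩ => ?_⟩
    calc b = ⟪z, q⟫ := hb.symm
    _ ≤ ‖z‖ * ‖q‖ := real_inner_le_norm z q
    _ ≤ ‖z‖ * r := by
        have := hnormle q hq
        nlinarith [norm_nonneg z, norm_nonneg q]
  have hneinner : ((fun y => ⟪z, y⟫) '' F).Nonempty := hF.image _
  set M := sSup (norm '' F) with hM
  have hMle : ∀ q ∈ F, ‖q‖ ≤ M := fun q hq =>
    le_csSup hbddnorm ⟨q, hq, rfl⟩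
  have hM0 : 0 ≤ M := le_trans (norm_nonneg hF.choose) (hMle hF.choose hF.choose_spec)
  constructor
  · obtain ⟨p, hp, hdp⟩ := hFc.exists_infDist_eq_dist hF w
    have hdist : Metric.infDist w F = ‖w - p‖ := by rw [hdp, dist_eq_norm]
    rw [hdist]
    calc (1 / (2 * μ)) * ‖z‖ ^ 2 - (μ / 2) * ‖w - p‖ ^ 2
        = ⟪z, p⟫ - (μ / 2) * ‖p‖ ^ 2 := key_identity μ hμ z p
      _ ≤ ⟪z, p⟫ := by nlinarith [norm_nonneg p, sq_nonneg ‖p‖]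
      _ ≤ sSup ((fun y => ⟪z, y⟫) '' F) := le_csSup hbddinner ⟨p, hp, rfl⟩
  · apply csSup_le hneinner
    rintro b ⟨q, hq, rfl⟩
    have hd1 : Metric.infDist w F ≤ ‖w - q‖ := by
      rw [← dist_eq_norm]; exact Metric.infDist_le_dist_of_mem hq
    have hd0 : 0 ≤ Metric.infDist w F := Metric.infDist_nonneg
    have hsq : Metric.infDist w F ^ 2 ≤ ‖w - q‖ ^ 2 := by nlinarith
    have hk := key_identity μ hμ z q
    have hq2 : ‖q‖ ^ 2 ≤ M ^ 2 := by nlinarith [hMle q hq, norm_nonneg q]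
    nlinarith [hμ]
end

section
/- Let (x_k), (y_k) be a DCA sequence for f = g − h. If g is γ₁-convex and h is γ₂-convex (γ₁, γ₂ ≥ 0), then for every k ≥ 1, f(x_k) − f(x_{k+1}) ≥ ((γ₁ + γ₂)/2)·‖x_{k+1} − x_k‖². -/
/-!
Strong convexity upgrades the subgradient inequality by a quadratic term: if `v ∈ ∂ψ(x)` and `ψ` is
`γ`-convex, then `ψ z ≥ ψ x + ⟪v, z - x⟫ + γ/2 ‖z - x‖²`. In a DCA step the same `y_{k+1}` is a
subgradient of `g` at `x_{k+1}` and of `h` at `x_k`; applying the strengthened inequality to `g`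
at `x_{k+1}` (evaluated at `x_k`) and to `h` at `x_k` (evaluated at `x_{k+1}`), the inner products
cancel when the two inequalities are added.
-/

open scoped RealInnerProductSpace Topology
open Filter Set

section

variable {E : Type*} [NormedAddCommGroup E] [InnerProductSpace ℝ E] {s : Set E} {m : ℝ}
  {f : E → ℝ} {x z v : E}

theorem StrongConvexOn.add_inner_add_sq_le (hf : StrongConvexOn s m f) (hx : x ∈ s) (hz : z ∈ s)
    (hv : ∀ w ∈ s, f x + ⟪v, w - x⟫ ≤ f w) :
    f x + ⟪v, z - x⟫ + m / 2 * ‖z - x‖ ^ 2 ≤ f z := by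
  set q := m / 2 * ‖z - x‖ ^ 2
  -- Compare `f` at `(1 - t) • x + t • z` from below (subgradient) and above (strong convexity).
  have along_segment : ∀ t ∈ Ioo (0 : ℝ) 1, f x + ⟪v, z - x⟫ + (1 - t) * q ≤ f z := by
    rintro t ⟨ht₀, ht₁⟩
    have hsub := hv _ (hf.1 hx hz (sub_nonneg.2 ht₁.le) ht₀.le (sub_add_cancel 1 t))
    have hconv := hf.2 hx hz (sub_nonneg.2 ht₁.le) ht₀.le (sub_add_cancel 1 t)
    have hseg : (1 - t) • x + t • z - x = t • (z - x) := by module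
    rw [hseg, real_inner_smul_right] at hsub
    rw [smul_eq_mul, smul_eq_mul, norm_sub_rev] at hconv
    refine le_of_mul_le_mul_left ?_ ht₀
    linear_combination hsub + hconv
  have hlim : Tendsto (fun t : ℝ => f x + ⟪v, z - x⟫ + (1 - t) * q) (𝓝[>] 0)
      (𝓝 (f x + ⟪v, z - x⟫ + (1 - 0) * q)) :=
    ((by fun_prop : Continuous fun t : ℝ => f x + ⟪v, z - x⟫ + (1 - t) * q).tendsto 0).mono_left
      nhdsWithin_le_nhds
  simpa using le_of_tendsto hlim (eventually_of_mem (Ioo_mem_nhdsGT one_pos) along_segment)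

end

theorem stmt_2_general {n : ℕ} (g h : EuclideanSpace ℝ (Fin n) → ℝ)
    (γ₁ γ₂ : ℝ)
    (hg : ConvexOn ℝ Set.univ fun z : EuclideanSpace ℝ (Fin n) => g z - γ₁ / 2 * ‖z‖ ^ 2)
    (hh : ConvexOn ℝ Set.univ fun z : EuclideanSpace ℝ (Fin n) => h z - γ₂ / 2 * ‖z‖ ^ 2)
    (x y : ℕ → EuclideanSpace ℝ (Fin n))
    (hdca : ∀ k : ℕ, 1 ≤ k →
      (∀ z, h (x (k - 1)) + ⟪y k, z - x (k - 1)⟫ ≤ h z) ∧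
      (∀ z, g (x k) + ⟪y k, z - x k⟫ ≤ g z))
    (k : ℕ) :
    (γ₁ + γ₂) / 2 * ‖x (k + 1) - x k‖ ^ 2
      ≤ (g (x k) - h (x k)) - (g (x (k + 1)) - h (x (k + 1))) := by
  obtain ⟨hy_h, hy_g⟩ := hdca (k + 1) (Nat.le_add_left 1 k)
  rw [Nat.add_sub_cancel] at hy_h
  have hg_step := (strongConvexOn_iff_convex.2 hg).add_inner_add_sq_le (mem_univ (x (k + 1)))
    (mem_univ (x k)) fun w _ => hy_g w
  have hh_step := (strongConvexOn_iff_convex.2 hh).add_inner_add_sq_le (mem_univ (x k))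
    (mem_univ (x (k + 1))) fun w _ => hy_h w
  rw [norm_sub_rev, ← neg_sub, inner_neg_right] at hg_step
  linarith

theorem stmt_2 {n : ℕ} (g h : EuclideanSpace ℝ (Fin n) → ℝ)
    (γ₁ γ₂ : ℝ) (hγ₁ : 0 ≤ γ₁) (hγ₂ : 0 ≤ γ₂)
    (hg : ConvexOn ℝ Set.univ fun z : EuclideanSpace ℝ (Fin n) => g z - γ₁ / 2 * ‖z‖ ^ 2)
    (hh : ConvexOn ℝ Set.univ fun z : EuclideanSpace ℝ (Fin n) => h z - γ₂ / 2 * ‖z‖ ^ 2)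
    (x y : ℕ → EuclideanSpace ℝ (Fin n))
    (hdca : ∀ k : ℕ, 1 ≤ k →
      (∀ z, h (x (k - 1)) + ⟪y k, z - x (k - 1)⟫ ≤ h z) ∧
      (∀ z, g (x k) + ⟪y k, z - x k⟫ ≤ g z))
    (k : ℕ) (hk : 1 ≤ k) :
    (γ₁ + γ₂) / 2 * ‖x (k + 1) - x k‖ ^ 2
      ≤ (g (x k) - h (x k)) - (g (x (k + 1)) - h (x (k + 1))) :=
  stmt_2_general g h γ₁ γ₂ hg hh x y hdca k
end

section
/- Let (x_k), (y_k) be a DCA sequence for f = g − h. Then the sequence (f(x_k))_{k≥0} is monotone decreasing, i.e., f(x_{k+1}) ≤ f(x_k) for all k ≥ 0. -/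
open scoped RealInnerProductSpace

theorem stmt_3 {n : ℕ} (g h : EuclideanSpace ℝ (Fin n) → ℝ)
    (hg : ConvexOn ℝ Set.univ g) (hh : ConvexOn ℝ Set.univ h)
    (x y : ℕ → EuclideanSpace ℝ (Fin n))
    (hdca : ∀ k : ℕ, 1 ≤ k →
      (∀ z, h (x (k - 1)) + ⟪y k, z - x (k - 1)⟫ ≤ h z) ∧
      (∀ z, g (x k) + ⟪y k, z - x k⟫ ≤ g z)) :
    ∀ k : ℕ, (g (x (k + 1)) - h (x (k + 1))) ≤ (g (x k) - h (x k)) := by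
  intro k
  obtain ⟨h1, h2⟩ := hdca (k + 1) (Nat.le_add_left 1 k)
  simp only [Nat.add_sub_cancel] at h1
  have a := h1 (x (k + 1))
  have b := h2 (x k)
  have : ⟪y (k+1), x k - x (k+1)⟫ = - ⟪y (k+1), x (k+1) - x k⟫ := by
    rw [← inner_neg_right, neg_sub]
  rw [this] at b
  linarith
end

section
/- Let (x_k), (y_k) be a DCA sequence for f = g − h. Assume f is bounded from below on ℝⁿ, g is γ₁-convex, h is γ₂-convex with γ₁ + γ₂ > 0, and the sequence (x_k) is bounded. Then every subsequential limit x̄ of (x_k) is a critical point of f, i.e., ∂g(x̄) ∩ ∂h(x̄) ≠ ∅. -/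
open scoped RealInnerProductSpace

/-!
A `γ`-convex function `f` satisfies the strengthened subgradient inequality
`f z ≥ f x + ⟪v, z - x⟫ + γ/2 ‖z - x‖²`. Adding these inequalities for `g` and `h` along one DCA
step shows that `f = g - h` decreases by at least `(γ₁ + γ₂)/2 ‖x_{k+1} - x_k‖²`, so, `f` being
bounded below, `x_{k+1} - x_k → 0`. Hence along the subsequence both `x_{φ j}` and `x_{φ j + 1}`
tend to `x̄`. The `y_{φ j + 1} ∈ ∂h(x_{φ j})` are bounded, since `h` is continuous and the
`x_{φ j}` converge; any cluster point `v` of them lies in `∂g(x̄) ∩ ∂h(x̄)` because the graph of the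
subdifferential of a continuous function is closed.
-/

open Filter Set Topology

lemma continuous_of_convexOn_sub_sq {E : Type*} [NormedAddCommGroup E] [NormedSpace ℝ E]
    [FiniteDimensional ℝ E] {f : E → ℝ} {m : ℝ}
    (hf : ConvexOn ℝ univ fun z => f z - m / 2 * ‖z‖ ^ 2) : Continuous f := by
  have hsq : Continuous fun z : E => m / 2 * ‖z‖ ^ 2 := by fun_prop
  exact (hf.locallyLipschitz.continuous.add hsq).congr fun z => sub_add_cancel (f z) _

lemma tendsto_zero_of_mul_sq_norm_le_sub_succ {E : Type*} [SeminormedAddCommGroup E]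
    {u : ℕ → ℝ} {d : ℕ → E} {c : ℝ} (hc : 0 < c)
    (hu : BddBelow (range u)) (hd : ∀ k, c * ‖d k‖ ^ 2 ≤ u k - u (k + 1)) :
    Tendsto d atTop (𝓝 0) := by
  have hanti : Antitone u := antitone_nat_of_succ_le fun k =>
    sub_nonneg.1 <| (by positivity : 0 ≤ c * ‖d k‖ ^ 2).trans (hd k)
  have hlim := tendsto_atTop_ciInf hanti hu
  have hgap : Tendsto (fun k => (u k - u (k + 1)) / c) atTop (𝓝 0) := by
    simpa using (hlim.sub (hlim.comp (tendsto_add_atTop_nat 1))).div_const c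
  have hsq : Tendsto (fun k => ‖d k‖ ^ 2) atTop (𝓝 0) :=
    squeeze_zero (fun k => by positivity) (fun k => (le_div_iff₀' hc).2 (hd k)) hgap
  refine tendsto_zero_iff_norm_tendsto_zero.2 ?_
  simpa [Real.sqrt_sq (norm_nonneg _)] using hsq.sqrt

variable {E : Type*} [NormedAddCommGroup E] [InnerProductSpace ℝ E]

def subgradients (f : E → ℝ) (x : E) : Set E :=
  {v | ∀ z, f x + ⟪v, z - x⟫ ≤ f z}

lemma StrongConvexOn.add_sq_le_of_mem_subgradients {f : E → ℝ} {m : ℝ} {x v : E}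
    (hf : StrongConvexOn univ m f) (hv : v ∈ subgradients f x) (z : E) :
    f x + ⟪v, z - x⟫ + m / 2 * ‖z - x‖ ^ 2 ≤ f z := by
  have hineq : ∀ t ∈ Ioo (0 : ℝ) 1,
      ⟪v, z - x⟫ + (1 - t) * (m / 2 * ‖z - x‖ ^ 2) ≤ f z - f x := by
    rintro t ⟨ht₀, ht₁⟩
    have hconv :=
      hf.2 (mem_univ z) (mem_univ x) ht₀.le (sub_nonneg.2 ht₁.le) (add_sub_cancel t 1)
    have hsub := hv (t • z + (1 - t) • x)
    rw [show t • z + (1 - t) • x - x = t • (z - x) by module, real_inner_smul_right] at hsub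
    simp only [smul_eq_mul] at hconv
    nlinarith
  have hlim : Tendsto (fun t : ℝ => ⟪v, z - x⟫ + (1 - t) * (m / 2 * ‖z - x‖ ^ 2)) (𝓝[>] 0)
      (𝓝 (⟪v, z - x⟫ + (1 - 0) * (m / 2 * ‖z - x‖ ^ 2))) :=
    ((continuous_const.add ((continuous_const.sub continuous_id).mul continuous_const)).tendsto
      0).mono_left nhdsWithin_le_nhds
  have hle := le_of_tendsto hlim (eventually_of_mem (Ioo_mem_nhdsGT one_pos) hineq)
  linarith

lemma sub_add_sq_le_sub_of_mem_subgradients {g h : E → ℝ} {γ₁ γ₂ : ℝ}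
    (hg : StrongConvexOn univ γ₁ g) (hh : StrongConvexOn univ γ₂ h) {x x' y : E}
    (hyh : y ∈ subgradients h x) (hyg : y ∈ subgradients g x') :
    g x' - h x' + (γ₁ + γ₂) / 2 * ‖x' - x‖ ^ 2 ≤ g x - h x := by
  have hh' := hh.add_sq_le_of_mem_subgradients hyh x'
  have hg' := hg.add_sq_le_of_mem_subgradients hyg x
  rw [← neg_sub x' x, inner_neg_right, norm_neg] at hg'
  linarith

lemma isBounded_biUnion_subgradients [ProperSpace E] {f : E → ℝ} (hf : Continuous f) {S : Set E}
    (hS : Bornology.IsBounded S) : Bornology.IsBounded (⋃ x ∈ S, subgradients f x) := by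
  obtain ⟨R, hR⟩ := hS.subset_closedBall 0
  obtain ⟨C, hC⟩ := (isCompact_closedBall (0 : E) (R + 1)).exists_bound_of_continuousOn
    hf.continuousOn
  refine isBounded_iff_forall_norm_le.2 ⟨2 * C, ?_⟩
  simp only [mem_iUnion]
  rintro v ⟨x, hx, hv⟩
  have hxR : ‖x‖ ≤ R := by simpa using hR hx
  have hfx := hC x (by simpa using hxR.trans (by linarith))
  rcases eq_or_ne v 0 with rfl | hv0
  · rw [norm_zero]; linarith [norm_nonneg (f x)]
  set u := ‖v‖⁻¹ • v
  have hu : ‖u‖ = 1 := norm_smul_inv_norm hv0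
  have hvu : ⟪v, u⟫ = ‖v‖ := by
    rw [real_inner_smul_right, real_inner_self_eq_norm_sq, sq,
      inv_mul_cancel_left₀ (norm_ne_zero_iff.2 hv0)]
  have hfxu := hC (x + u) (by simpa using (norm_add_le x u).trans (by rw [hu]; linarith))
  have hsub := hv (x + u)
  rw [add_sub_cancel_left, hvu] at hsub
  rw [Real.norm_eq_abs, abs_le] at hfx hfxu
  linarith

lemma mem_subgradients_of_tendsto {ι : Type*} {l : Filter ι} [l.NeBot] {f : E → ℝ}
    (hf : Continuous f) {x : ι → E} {v : ι → E} {x₀ v₀ : E} (hx : Tendsto x l (𝓝 x₀))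
    (hv : Tendsto v l (𝓝 v₀)) (hxv : ∀ i, v i ∈ subgradients f (x i)) :
    v₀ ∈ subgradients f x₀ := fun z =>
  le_of_tendsto ((hf.tendsto x₀).comp hx |>.add (hv.inner (tendsto_const_nhds.sub hx)))
    (Eventually.of_forall fun i => hxv i z)

lemma tendsto_comp_add_one_of_tendsto_sub {X : Type*} [SeminormedAddCommGroup X] {x : ℕ → X}
    {φ : ℕ → ℕ} {a : X} (hx : Tendsto (fun k => x (k + 1) - x k) atTop (𝓝 0))
    (hφ : Tendsto φ atTop atTop) (hxφ : Tendsto (fun j => x (φ j)) atTop (𝓝 a)) :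
    Tendsto (fun j => x (φ j + 1)) atTop (𝓝 a) := by
  simpa using hxφ.add (hx.comp hφ)

theorem stmt_4_general {n : ℕ} (g h : EuclideanSpace ℝ (Fin n) → ℝ)
    (γ₁ γ₂ : ℝ) (hγ : 0 < γ₁ + γ₂)
    (hg : ConvexOn ℝ Set.univ fun z : EuclideanSpace ℝ (Fin n) => g z - γ₁ / 2 * ‖z‖ ^ 2)
    (hh : ConvexOn ℝ Set.univ fun z : EuclideanSpace ℝ (Fin n) => h z - γ₂ / 2 * ‖z‖ ^ 2)
    (x y : ℕ → EuclideanSpace ℝ (Fin n))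
    (hdca : ∀ k : ℕ, 1 ≤ k →
      (∀ z, h (x (k - 1)) + ⟪y k, z - x (k - 1)⟫ ≤ h z) ∧
      (∀ z, g (x k) + ⟪y k, z - x k⟫ ≤ g z))
    (hbdd : ∃ c : ℝ, ∀ z, c ≤ g z - h z)
    (xbar : EuclideanSpace ℝ (Fin n)) (φ : ℕ → ℕ) (hφ : StrictMono φ)
    (hlim : Filter.Tendsto (fun j => x (φ j)) Filter.atTop (nhds xbar)) :
    ({v | ∀ z, g xbar + ⟪v, z - xbar⟫ ≤ g z} ∩
      {v | ∀ z, h xbar + ⟪v, z - xbar⟫ ≤ h z}).Nonempty := by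
  have hstep (k : ℕ) :
      y (k + 1) ∈ subgradients h (x k) ∧ y (k + 1) ∈ subgradients g (x (k + 1)) :=
    hdca (k + 1) k.succ_pos
  obtain ⟨c, hc⟩ := hbdd
  have hdiff : Tendsto (fun k => x (k + 1) - x k) atTop (𝓝 0) :=
    tendsto_zero_of_mul_sq_norm_le_sub_succ (half_pos hγ)
      ⟨c, forall_mem_range.2 fun k => hc (x k)⟩ fun k => le_sub_iff_add_le'.2 <|
        sub_add_sq_le_sub_of_mem_subgradients (strongConvexOn_iff_convex.2 hg)
          (strongConvexOn_iff_convex.2 hh) (hstep k).1 (hstep k).2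
  have hlim' := tendsto_comp_add_one_of_tendsto_sub hdiff hφ.tendsto_atTop hlim
  obtain ⟨v, -, ψ, hψ, hv⟩ := tendsto_subseq_of_bounded
    (isBounded_biUnion_subgradients (continuous_of_convexOn_sub_sq hh)
      (Metric.isBounded_range_of_tendsto _ hlim))
    fun j => mem_biUnion (mem_range_self j) (hstep (φ j)).1
  exact ⟨v,
    mem_subgradients_of_tendsto (continuous_of_convexOn_sub_sq hg)
      (hlim'.comp hψ.tendsto_atTop) hv fun i => (hstep (φ (ψ i))).2,
    mem_subgradients_of_tendsto (continuous_of_convexOn_sub_sq hh)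
      (hlim.comp hψ.tendsto_atTop) hv fun i => (hstep (φ (ψ i))).1⟩

theorem stmt_4 {n : ℕ} (g h : EuclideanSpace ℝ (Fin n) → ℝ)
    (γ₁ γ₂ : ℝ) (hγ₁ : 0 ≤ γ₁) (hγ₂ : 0 ≤ γ₂) (hγ : 0 < γ₁ + γ₂)
    (hg : ConvexOn ℝ Set.univ fun z : EuclideanSpace ℝ (Fin n) => g z - γ₁ / 2 * ‖z‖ ^ 2)
    (hh : ConvexOn ℝ Set.univ fun z : EuclideanSpace ℝ (Fin n) => h z - γ₂ / 2 * ‖z‖ ^ 2)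
    (x y : ℕ → EuclideanSpace ℝ (Fin n))
    (hdca : ∀ k : ℕ, 1 ≤ k →
      (∀ z, h (x (k - 1)) + ⟪y k, z - x (k - 1)⟫ ≤ h z) ∧
      (∀ z, g (x k) + ⟪y k, z - x k⟫ ≤ g z))
    (hbdd : ∃ c : ℝ, ∀ z, c ≤ g z - h z)
    (hxbounded : Bornology.IsBounded (Set.range x))
    (xbar : EuclideanSpace ℝ (Fin n)) (φ : ℕ → ℕ) (hφ : StrictMono φ)
    (hlim : Filter.Tendsto (fun j => x (φ j)) Filter.atTop (nhds xbar)) :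
    ({v | ∀ z, g xbar + ⟪v, z - xbar⟫ ≤ g z} ∩
      {v | ∀ z, h xbar + ⟪v, z - xbar⟫ ≤ h z}).Nonempty :=
  stmt_4_general g h γ₁ γ₂ hγ hg hh x y hdca hbdd xbar φ hφ hlim
end

section
/- The Model I penalized objective f admits the DC decomposition f = g₀ − h₀, where g₀(x¹,…,x^k) = (2+λ) Σ_{i=1}^m Σ_{ℓ=1}^k σ_F(x^ℓ − a^i) and h₀(x¹,…,x^k) = Σ_{i=1}^m max_{t=1,…,k} Σ_{ℓ≠t} σ_F(x^ℓ − a^i) + λ Σ_{ℓ=1}^k max_{t=1,…,m} Σ_{i≠t} σ_F(x^ℓ − a^i) + max_{t=1,…,m} Σ_{i≠t} Σ_{ℓ=1}^k σ_F(x^ℓ − a^i); moreover both g₀ and h₀ are convex functions on (ℝⁿ)^k. -/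
open scoped RealInnerProductSpace

/-- The support function `σ_F` of a set `F ⊆ ℝⁿ`. -/
noncomputable def suppF {n : ℕ} (F : Set (EuclideanSpace ℝ (Fin n)))
    (x : EuclideanSpace ℝ (Fin n)) : ℝ :=
  sSup ((fun y => ⟪x, y⟫) '' F)

/-- Minimum of finitely many real numbers indexed by `Fin m`, `m ≥ 1`. -/
noncomputable def fmin {m : ℕ} (hm : 1 ≤ m) (α : Fin m → ℝ) : ℝ :=
  Finset.univ.inf' (Finset.univ_nonempty_iff.mpr ⟨⟨0, hm⟩⟩) α

/-- Maximum of finitely many real numbers indexed by `Fin m`, `m ≥ 1`. -/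
noncomputable def fmax {m : ℕ} (hm : 1 ≤ m) (α : Fin m → ℝ) : ℝ :=
  Finset.univ.sup' (Finset.univ_nonempty_iff.mpr ⟨⟨0, hm⟩⟩) α

/-- `min = total − max of complements`. -/
lemma fmin_eq_sub_fmax {m : ℕ} (hm : 1 ≤ m) (α : Fin m → ℝ) :
    fmin hm α = (∑ i, α i) - fmax hm (fun t => ∑ i ∈ Finset.univ.erase t, α i) := by
  set S := ∑ i, α i with hS
  have herase : ∀ t : Fin m, ∑ i ∈ Finset.univ.erase t, α i = S - α t := fun t =>
    Finset.sum_erase_eq_sub (Finset.mem_univ t)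
  have hne : (Finset.univ : Finset (Fin m)).Nonempty :=
    Finset.univ_nonempty_iff.mpr ⟨⟨0, hm⟩⟩
  have hmax : fmax hm (fun t => ∑ i ∈ Finset.univ.erase t, α i) = S - fmin hm α := by
    unfold fmax fmin
    simp only [herase]
    apply le_antisymm
    · exact Finset.sup'_le _ _ fun t _ =>
        sub_le_sub_left (Finset.inf'_le _ (Finset.mem_univ t)) S
    · obtain ⟨t, ht, hteq⟩ := Finset.exists_mem_eq_inf' hne α
      rw [hteq]
      exact Finset.le_sup' (fun t => S - α t) (Finset.mem_univ t)
  rw [hmax]; ring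

/-- sublinearity of the support function for convex combinations. -/
lemma suppF_combo_le {n : ℕ} {F : Set (EuclideanSpace ℝ (Fin n))}
    (hF : F.Nonempty) (hFc : IsClosed F) (hFb : Bornology.IsBounded F)
    (x y : EuclideanSpace ℝ (Fin n)) {t s : ℝ} (ht : 0 ≤ t) (hs : 0 ≤ s) :
    suppF F (t • x + s • y) ≤ t * suppF F x + s * suppF F y := by
  have hcomp : IsCompact F := Metric.isCompact_iff_isClosed_bounded.mpr ⟨hFc, hFb⟩
  have hbdd : ∀ w : EuclideanSpace ℝ (Fin n), BddAbove ((fun y => ⟪w, y⟫) '' F) := fun w =>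
    (hcomp.image (Continuous.inner continuous_const continuous_id)).bddAbove
  apply csSup_le (hF.image _)
  rintro r ⟨z, hz, rfl⟩
  have h1 : ⟪x, z⟫ ≤ suppF F x := le_csSup (hbdd x) ⟨z, hz, rfl⟩
  have h2 : ⟪y, z⟫ ≤ suppF F y := le_csSup (hbdd y) ⟨z, hz, rfl⟩
  show ⟪t • x + s • y, z⟫ ≤ t * suppF F x + s * suppF F y
  rw [inner_add_left, real_inner_smul_left, real_inner_smul_left]
  exact add_le_add (mul_le_mul_of_nonneg_left h1 ht) (mul_le_mul_of_nonneg_left h2 hs)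

/-- convexity of `X ↦ σ_F(X ℓ − b)`. -/
lemma suppF_comp_convex {n k : ℕ} {F : Set (EuclideanSpace ℝ (Fin n))}
    (hF : F.Nonempty) (hFc : IsClosed F) (hFb : Bornology.IsBounded F)
    (b : EuclideanSpace ℝ (Fin n)) (ℓ : Fin k) :
    ConvexOn ℝ Set.univ (fun X : Fin k → EuclideanSpace ℝ (Fin n) => suppF F (X ℓ - b)) := by
  refine ⟨convex_univ, fun X _ Y _ t s ht hs hts => ?_⟩
  have harg : (t • X + s • Y) ℓ - b = t • (X ℓ - b) + s • (Y ℓ - b) := by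
    have hb : b = t • b + s • b := by rw [← add_smul, hts, one_smul]
    simp only [Pi.add_apply, Pi.smul_apply, smul_sub]
    conv_lhs => rw [hb]
    abel
  show suppF F ((t • X + s • Y) ℓ - b) ≤ t * suppF F (X ℓ - b) + s * suppF F (Y ℓ - b)
  rw [harg]
  exact suppF_combo_le hF hFc hFb (X ℓ - b) (Y ℓ - b) ht hs

/-- A finite sup of convex functions is convex. -/
lemma convexOn_sup' {E : Type*} [AddCommGroup E] [Module ℝ E] {ι : Type*}
    {s : Finset ι} (hs : s.Nonempty) (g : ι → E → ℝ)
    (hg : ∀ i ∈ s, ConvexOn ℝ Set.univ (g i)) :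
    ConvexOn ℝ Set.univ (fun x => s.sup' hs fun i => g i x) := by
  refine ⟨convex_univ, fun x _ y _ t u ht hu htu => ?_⟩
  apply Finset.sup'_le
  intro i hi
  calc g i (t • x + u • y) ≤ t * g i x + u * g i y := by
        simpa using (hg i hi).2 (Set.mem_univ x) (Set.mem_univ y) ht hu htu
    _ ≤ t * (s.sup' hs fun i => g i x) + u * (s.sup' hs fun i => g i y) :=
        add_le_add (mul_le_mul_of_nonneg_left (Finset.le_sup' (fun i => g i x) hi) ht)
          (mul_le_mul_of_nonneg_left (Finset.le_sup' (fun i => g i y) hi) hu)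

/-- A finite sum of convex functions is convex. -/
lemma convexOn_finset_sum {E : Type*} [AddCommGroup E] [Module ℝ E] {ι : Type*}
    (s : Finset ι) (g : ι → E → ℝ)
    (hg : ∀ i ∈ s, ConvexOn ℝ Set.univ (g i)) :
    ConvexOn ℝ Set.univ (fun x => ∑ i ∈ s, g i x) := by
  classical
  induction s using Finset.induction_on with
  | empty => simpa using convexOn_const (0 : ℝ) convex_univ
  | @insert j s' hns ih =>
    simp only [Finset.sum_insert hns]
    exact (hg j (Finset.mem_insert_self j s')).add
      (ih fun i hi => hg i (Finset.mem_insert_of_mem hi))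

/-- Nonnegative constant multiple of a convex function is convex. -/
lemma convexOn_const_mul {E : Type*} [AddCommGroup E] [Module ℝ E] {c : ℝ}
    (hc : 0 ≤ c) {g : E → ℝ} (hg : ConvexOn ℝ Set.univ g) :
    ConvexOn ℝ Set.univ (fun x => c * g x) := by
  refine ⟨convex_univ, fun x _ y _ t u ht hu htu => ?_⟩
  have h := hg.2 (Set.mem_univ x) (Set.mem_univ y) ht hu htu
  simp only [smul_eq_mul] at h ⊢
  nlinarith [mul_le_mul_of_nonneg_left h hc]

set_option maxHeartbeats 1000000 in
theorem stmt_6 {n m k : ℕ} (hm : 1 ≤ m) (hk : 1 ≤ k)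
    (a : Fin m → EuclideanSpace ℝ (Fin n))
    (F : Set (EuclideanSpace ℝ (Fin n)))
    (hF : F.Nonempty) (hFc : IsClosed F) (hFb : Bornology.IsBounded F)
    (hFconv : Convex ℝ F) (hF0 : (0 : EuclideanSpace ℝ (Fin n)) ∈ interior F)
    (lam : ℝ) (hlam : 0 < lam) :
    (∀ X : Fin k → EuclideanSpace ℝ (Fin n),
        (∑ i, fmin hk (fun ℓ => suppF F (X ℓ - a i))
            + fmin hm (fun i => ∑ ℓ, suppF F (X ℓ - a i))
            + lam * ∑ ℓ, fmin hm (fun i => suppF F (X ℓ - a i)))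
          = ((2 + lam) * ∑ i, ∑ ℓ, suppF F (X ℓ - a i))
            - (∑ i, fmax hk (fun t => ∑ ℓ ∈ Finset.univ.erase t, suppF F (X ℓ - a i))
                + lam * ∑ ℓ, fmax hm (fun t => ∑ i ∈ Finset.univ.erase t, suppF F (X ℓ - a i))
                + fmax hm (fun t => ∑ i ∈ Finset.univ.erase t, ∑ ℓ, suppF F (X ℓ - a i))))
      ∧ ConvexOn ℝ Set.univ (fun X : Fin k → EuclideanSpace ℝ (Fin n) =>
          (2 + lam) * ∑ i, ∑ ℓ, suppF F (X ℓ - a i))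
      ∧ ConvexOn ℝ Set.univ (fun X : Fin k → EuclideanSpace ℝ (Fin n) =>
          ∑ i, fmax hk (fun t => ∑ ℓ ∈ Finset.univ.erase t, suppF F (X ℓ - a i))
            + lam * ∑ ℓ, fmax hm (fun t => ∑ i ∈ Finset.univ.erase t, suppF F (X ℓ - a i))
            + fmax hm (fun t => ∑ i ∈ Finset.univ.erase t, ∑ ℓ, suppF F (X ℓ - a i))) := by
  have hconv : ∀ (i : Fin m) (ℓ : Fin k),
      ConvexOn ℝ Set.univ (fun X : Fin k → EuclideanSpace ℝ (Fin n) => suppF F (X ℓ - a i)) :=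
    fun i ℓ => suppF_comp_convex hF hFc hFb (a i) ℓ
  refine ⟨?_, ?_, ?_⟩
  · intro X
    have e1 : ∀ i : Fin m, fmin hk (fun ℓ => suppF F (X ℓ - a i))
        = (∑ ℓ, suppF F (X ℓ - a i))
          - fmax hk (fun t => ∑ ℓ ∈ Finset.univ.erase t, suppF F (X ℓ - a i)) :=
      fun i => fmin_eq_sub_fmax hk _
    have e2 : fmin hm (fun i => ∑ ℓ, suppF F (X ℓ - a i))
        = (∑ i, ∑ ℓ, suppF F (X ℓ - a i))
          - fmax hm (fun t => ∑ i ∈ Finset.univ.erase t, ∑ ℓ, suppF F (X ℓ - a i)) :=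
      fmin_eq_sub_fmax hm _
    have e3 : ∀ ℓ : Fin k, fmin hm (fun i => suppF F (X ℓ - a i))
        = (∑ i, suppF F (X ℓ - a i))
          - fmax hm (fun t => ∑ i ∈ Finset.univ.erase t, suppF F (X ℓ - a i)) :=
      fun ℓ => fmin_eq_sub_fmax hm _
    have hcomm : ∑ ℓ, ∑ i, suppF F (X ℓ - a i) = ∑ i, ∑ ℓ, suppF F (X ℓ - a i) :=
      Finset.sum_comm
    simp only [e1, e2, e3, Finset.sum_sub_distrib]
    rw [hcomm]
    ring
  · refine convexOn_const_mul (E := Fin k → EuclideanSpace ℝ (Fin n)) (by linarith) ?_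
    apply convexOn_finset_sum (E := Fin k → EuclideanSpace ℝ (Fin n)) Finset.univ
      (fun i X => ∑ ℓ, suppF F (X ℓ - a i))
    intro i _
    exact convexOn_finset_sum (E := Fin k → EuclideanSpace ℝ (Fin n)) Finset.univ
      (fun ℓ X => suppF F (X ℓ - a i)) (fun ℓ _ => hconv i ℓ)
  · have c1 : ConvexOn ℝ Set.univ (fun X : Fin k → EuclideanSpace ℝ (Fin n) =>
        ∑ i, fmax hk (fun t => ∑ ℓ ∈ Finset.univ.erase t, suppF F (X ℓ - a i))) := by
      apply convexOn_finset_sum (E := Fin k → EuclideanSpace ℝ (Fin n)) Finset.univ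
        (fun i X => fmax hk (fun t => ∑ ℓ ∈ Finset.univ.erase t, suppF F (X ℓ - a i)))
      intro i _
      exact convexOn_sup' (E := Fin k → EuclideanSpace ℝ (Fin n)) (Finset.univ_nonempty_iff.mpr ⟨⟨0, hk⟩⟩)
        (fun t X => ∑ ℓ ∈ Finset.univ.erase t, suppF F (X ℓ - a i))
        (fun t _ => convexOn_finset_sum (E := Fin k → EuclideanSpace ℝ (Fin n)) _
          (fun ℓ X => suppF F (X ℓ - a i)) (fun ℓ _ => hconv i ℓ))
    have c2 : ConvexOn ℝ Set.univ (fun X : Fin k → EuclideanSpace ℝ (Fin n) =>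
        lam * ∑ ℓ, fmax hm (fun t => ∑ i ∈ Finset.univ.erase t, suppF F (X ℓ - a i))) := by
      refine convexOn_const_mul (E := Fin k → EuclideanSpace ℝ (Fin n)) hlam.le ?_
      apply convexOn_finset_sum (E := Fin k → EuclideanSpace ℝ (Fin n)) Finset.univ
        (fun ℓ X => fmax hm (fun t => ∑ i ∈ Finset.univ.erase t, suppF F (X ℓ - a i)))
      intro ℓ _
      exact convexOn_sup' (E := Fin k → EuclideanSpace ℝ (Fin n)) (Finset.univ_nonempty_iff.mpr ⟨⟨0, hm⟩⟩)
        (fun t X => ∑ i ∈ Finset.univ.erase t, suppF F (X ℓ - a i))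
        (fun t _ => convexOn_finset_sum (E := Fin k → EuclideanSpace ℝ (Fin n)) _
          (fun i X => suppF F (X ℓ - a i)) (fun i _ => hconv i ℓ))
    have c3 : ConvexOn ℝ Set.univ (fun X : Fin k → EuclideanSpace ℝ (Fin n) =>
        fmax hm (fun t => ∑ i ∈ Finset.univ.erase t, ∑ ℓ, suppF F (X ℓ - a i))) := by
      exact convexOn_sup' (E := Fin k → EuclideanSpace ℝ (Fin n)) (Finset.univ_nonempty_iff.mpr ⟨⟨0, hm⟩⟩)
        (fun t X => ∑ i ∈ Finset.univ.erase t, ∑ ℓ, suppF F (X ℓ - a i))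
        (fun t _ => convexOn_finset_sum (E := Fin k → EuclideanSpace ℝ (Fin n)) _
          (fun i X => ∑ ℓ, suppF F (X ℓ - a i))
          (fun i _ => convexOn_finset_sum (E := Fin k → EuclideanSpace ℝ (Fin n)) _
            (fun ℓ X => suppF F (X ℓ - a i)) (fun ℓ _ => hconv i ℓ)))
    exact (c1.add c2).add c3
end

section
/- For every γ ∈ ℝ, the sublevel set L_γ = {(x¹,…,x^k) ∈ (ℝⁿ)^k : f(x¹,…,x^k) ≤ γ} of the Model I penalized objective f is a bounded subset of (ℝⁿ)^k. -/
open scoped RealInnerProductSpace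

lemma suppF_lb {n : ℕ} (F : Set (EuclideanSpace ℝ (Fin n)))
    (hF : F.Nonempty) (hFb : Bornology.IsBounded F)
    (hF0 : (0 : EuclideanSpace ℝ (Fin n)) ∈ interior F) :
    ∃ c : ℝ, 0 < c ∧ ∀ x, c * ‖x‖ ≤ suppF F x := by
  obtain ⟨R, hR⟩ := hFb.subset_closedBall 0
  obtain ⟨ε, hε, hball⟩ := Metric.mem_nhds_iff.mp (mem_interior_iff_mem_nhds.mp hF0)
  have hbdd : ∀ x : EuclideanSpace ℝ (Fin n), BddAbove ((fun y => ⟪x, y⟫) '' F) := by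
    intro x
    refine ⟨‖x‖ * R, ?_⟩
    rintro z ⟨y, hy, rfl⟩
    calc ⟪x, y⟫ ≤ ‖x‖ * ‖y‖ := real_inner_le_norm x y
    _ ≤ ‖x‖ * R := by
        have := hR hy
        simp only [Metric.mem_closedBall, dist_zero_right] at this
        exact mul_le_mul_of_nonneg_left this (norm_nonneg x)
  refine ⟨ε / 2, by linarith, fun x => ?_⟩
  by_cases hx : x = 0
  · subst hx
    obtain ⟨y, hy⟩ := hF
    simp only [norm_zero, mul_zero]
    calc (0:ℝ) = ⟪(0 : EuclideanSpace ℝ (Fin n)), y⟫ := by simp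
    _ ≤ suppF F 0 := le_csSup (hbdd 0) ⟨y, hy, rfl⟩
  · set y : EuclideanSpace ℝ (Fin n) := ((ε / 2) / ‖x‖) • x with hy
    have hxn : 0 < ‖x‖ := norm_pos_iff.mpr hx
    have hyF : y ∈ F := by
      apply hball
      simp only [Metric.mem_ball, dist_zero_right, hy, norm_smul, Real.norm_eq_abs]
      rw [abs_of_nonneg (by positivity), div_mul_cancel₀ _ (ne_of_gt hxn)]
      linarith
    have hval : ⟪x, y⟫ = (ε / 2) * ‖x‖ := by
      rw [hy, real_inner_smul_right, real_inner_self_eq_norm_sq]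
      field_simp
    calc ε / 2 * ‖x‖ = ⟪x, y⟫ := hval.symm
    _ ≤ suppF F x := le_csSup (hbdd x) ⟨y, hyF, rfl⟩

theorem stmt_9 {n m k : ℕ} (hm : 1 ≤ m) (hk : 1 ≤ k)
    (a : Fin m → EuclideanSpace ℝ (Fin n))
    (F : Set (EuclideanSpace ℝ (Fin n)))
    (hF : F.Nonempty) (hFc : IsClosed F) (hFb : Bornology.IsBounded F)
    (hFconv : Convex ℝ F) (hF0 : (0 : EuclideanSpace ℝ (Fin n)) ∈ interior F)
    (lam : ℝ) (hlam : 0 < lam) (γ : ℝ) :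
    Bornology.IsBounded {X : Fin k → EuclideanSpace ℝ (Fin n) |
      ∑ i, fmin hk (fun ℓ => suppF F (X ℓ - a i))
          + fmin hm (fun i => ∑ ℓ, suppF F (X ℓ - a i))
          + lam * ∑ ℓ, fmin hm (fun i => suppF F (X ℓ - a i)) ≤ γ} := by
  obtain ⟨c, hc, hcb⟩ := suppF_lb F hF hFb hF0
  have hs0 : ∀ x, (0 : ℝ) ≤ suppF F x := fun x =>
    le_trans (by positivity) (hcb x)
  set A : ℝ := fmax hm (fun i => ‖a i‖) with hA
  have hAle : ∀ i, ‖a i‖ ≤ A := fun i => by rw [hA]; unfold fmax; exact Finset.le_sup' (fun i => ‖a i‖) (Finset.mem_univ i)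
  set C : ℝ := max (A + γ / (lam * c)) 0 with hC
  rw [isBounded_iff_forall_norm_le]
  refine ⟨C, fun X hX => ?_⟩
  simp only [Set.mem_setOf_eq] at hX
  rw [pi_norm_le_iff_of_nonneg (le_max_right _ _)]
  intro ℓ
  -- key: fmin over i of suppF at ℓ is ≥ c * (‖X ℓ‖ - A)
  have hkey : c * (‖X ℓ‖ - A) ≤ fmin hm (fun i => suppF F (X ℓ - a i)) := by
    unfold fmin; apply Finset.le_inf'
    intro i _
    calc c * (‖X ℓ‖ - A) ≤ c * ‖X ℓ - a i‖ := by
          apply mul_le_mul_of_nonneg_left _ hc.le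
          have h1 : ‖X ℓ‖ - ‖a i‖ ≤ ‖X ℓ - a i‖ := norm_sub_norm_le _ _
          have := hAle i
          linarith
    _ ≤ suppF F (X ℓ - a i) := hcb _
  have hminnn : ∀ ℓ' : Fin k, (0 : ℝ) ≤ fmin hm (fun i => suppF F (X ℓ' - a i)) := by
    intro ℓ'
    unfold fmin; apply Finset.le_inf'
    intro i _
    exact hs0 _
  have hsum : fmin hm (fun i => suppF F (X ℓ - a i)) ≤
      ∑ ℓ', fmin hm (fun i => suppF F (X ℓ' - a i)) :=
    Finset.single_le_sum (fun ℓ' _ => hminnn ℓ') (Finset.mem_univ ℓ)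
  have ht1 : (0:ℝ) ≤ ∑ i, fmin hk (fun ℓ => suppF F (X ℓ - a i)) := by
    apply Finset.sum_nonneg
    intro i _
    unfold fmin; apply Finset.le_inf'
    intro ℓ' _
    exact hs0 _
  have ht2 : (0:ℝ) ≤ fmin hm (fun i => ∑ ℓ, suppF F (X ℓ - a i)) := by
    unfold fmin; apply Finset.le_inf'
    intro i _
    exact Finset.sum_nonneg fun ℓ' _ => hs0 _
  have hfin : lam * (c * (‖X ℓ‖ - A)) ≤ γ := by
    have h3 : lam * (c * (‖X ℓ‖ - A)) ≤ lam * ∑ ℓ', fmin hm (fun i => suppF F (X ℓ' - a i)) :=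
      mul_le_mul_of_nonneg_left (le_trans hkey hsum) hlam.le
    linarith
  have hlc : 0 < lam * c := mul_pos hlam hc
  have hdiv : ‖X ℓ‖ - A ≤ γ / (lam * c) := (le_div_iff₀ hlc).mpr (by nlinarith)
  have : ‖X ℓ‖ ≤ A + γ / (lam * c) := by linarith
  exact le_trans this (le_max_left _ _)
end

section
/- The Model I penalized objective f attains an absolute (global) minimum on (ℝⁿ)^k, i.e., there exists (x̄¹,…,x̄^k) ∈ (ℝⁿ)^k with f(x̄¹,…,x̄^k) ≤ f(x¹,…,x^k) for all x¹,…,x^k ∈ ℝⁿ. -/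
open scoped RealInnerProductSpace

/-!
The objective is continuous, since the support function of a bounded set is Lipschitz. It is also
coercive: a ball `closedBall 0 c ⊆ F` gives `c ‖x‖ ≤ σ_F x`, so the middle term
`min_i Σ_ℓ σ_F (x^ℓ - a^i)` alone is at least `c (‖x‖ - Σ_i ‖a^i‖)`, and the other two terms
are nonnegative. A continuous coercive function on the proper space `(ℝⁿ)^k` attains its minimum.
-/

open Bornology Filter Metric

section SupportFunction

variable {n : ℕ} {F : Set (EuclideanSpace ℝ (Fin n))}

lemma inner_le_suppF (hFb : IsBounded F) (x : EuclideanSpace ℝ (Fin n))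
    {y : EuclideanSpace ℝ (Fin n)} (hy : y ∈ F) : ⟪x, y⟫ ≤ suppF F x :=
  le_csSup ((innerSL ℝ x).lipschitz.isBounded_image hFb).bddAbove ⟨y, hy, rfl⟩

lemma suppF_le_of_forall_inner_le (hF : F.Nonempty) {x : EuclideanSpace ℝ (Fin n)} {b : ℝ}
    (h : ∀ y ∈ F, ⟪x, y⟫ ≤ b) : suppF F x ≤ b :=
  csSup_le (hF.image _) (by rintro _ ⟨y, hy, rfl⟩; exact h y hy)

lemma suppF_add_le (hF : F.Nonempty) (hFb : IsBounded F) (x x' : EuclideanSpace ℝ (Fin n)) :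
    suppF F (x + x') ≤ suppF F x + suppF F x' :=
  suppF_le_of_forall_inner_le hF fun y hy => by
    rw [inner_add_left]
    exact add_le_add (inner_le_suppF hFb x hy) (inner_le_suppF hFb x' hy)

lemma suppF_le_mul_norm (hF : F.Nonempty) {C : ℝ} (hC : ∀ y ∈ F, ‖y‖ ≤ C)
    (x : EuclideanSpace ℝ (Fin n)) : suppF F x ≤ C * ‖x‖ :=
  suppF_le_of_forall_inner_le hF fun y hy =>
    (real_inner_le_norm x y).trans <| by
      rw [mul_comm]; exact mul_le_mul_of_nonneg_right (hC y hy) (norm_nonneg x)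

lemma continuous_suppF (hF : F.Nonempty) (hFb : IsBounded F) : Continuous (suppF F) := by
  obtain ⟨C, hC⟩ := hFb.subset_closedBall 0
  have hC' : ∀ y ∈ F, ‖y‖ ≤ max C 0 := fun y hy =>
    (mem_closedBall_zero_iff.mp (hC hy)).trans (le_max_left C 0)
  refine (LipschitzWith.of_le_add_mul ⟨max C 0, le_max_right C 0⟩ fun x x' => ?_).continuous
  calc suppF F x = suppF F (x' + (x - x')) := by rw [add_sub_cancel]
    _ ≤ suppF F x' + suppF F (x - x') := suppF_add_le hF hFb x' (x - x')
    _ ≤ suppF F x' + max C 0 * dist x x' := by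
      rw [dist_eq_norm]; exact add_le_add_right (suppF_le_mul_norm hF hC' _) _

lemma exists_pos_mul_norm_le_suppF (hFb : IsBounded F)
    (hF0 : (0 : EuclideanSpace ℝ (Fin n)) ∈ interior F) :
    ∃ c > 0, ∀ x, c * ‖x‖ ≤ suppF F x := by
  obtain ⟨c, hc, hball⟩ := nhds_basis_closedBall.mem_iff.mp (mem_interior_iff_mem_nhds.mp hF0)
  refine ⟨c, hc, fun x => ?_⟩
  rcases eq_or_ne x 0 with rfl | hx
  · simpa using inner_le_suppF hFb 0 (interior_subset hF0)
  have hxn : 0 < ‖x‖ := norm_pos_iff.mpr hx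
  have hyF : (c / ‖x‖) • x ∈ F := hball <| by
    rw [mem_closedBall_zero_iff, norm_smul, Real.norm_of_nonneg (by positivity),
      div_mul_cancel₀ _ hxn.ne']
  calc c * ‖x‖ = ⟪x, (c / ‖x‖) • x⟫ := by
        rw [real_inner_smul_right, real_inner_self_eq_norm_sq]; field_simp
    _ ≤ suppF F x := inner_le_suppF hFb x hyF

end SupportFunction

lemma le_fmin {m : ℕ} (hm : 1 ≤ m) {α : Fin m → ℝ} {b : ℝ} (h : ∀ i, b ≤ α i) :
    b ≤ fmin hm α :=
  Finset.le_inf' _ _ fun i _ => h i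

lemma continuous_fmin {X : Type*} [TopologicalSpace X] {m : ℕ} (hm : 1 ≤ m)
    {g : Fin m → X → ℝ} (hg : ∀ i, Continuous (g i)) :
    Continuous fun x => fmin hm fun i => g i x :=
  Continuous.finset_inf'_apply _ fun i _ => hg i

section Objective

variable {n m k : ℕ} (hm : 1 ≤ m) (hk : 1 ≤ k) (a : Fin m → EuclideanSpace ℝ (Fin n))
  (F : Set (EuclideanSpace ℝ (Fin n))) (lam : ℝ)

noncomputable def penalizedObjective (X : Fin k → EuclideanSpace ℝ (Fin n)) : ℝ :=
  ∑ i, fmin hk (fun ℓ => suppF F (X ℓ - a i))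
    + fmin hm (fun i => ∑ ℓ, suppF F (X ℓ - a i))
    + lam * ∑ ℓ, fmin hm (fun i => suppF F (X ℓ - a i))

variable {F}

lemma continuous_penalizedObjective (hF : F.Nonempty) (hFb : IsBounded F) :
    Continuous (penalizedObjective hm hk a F lam) := by
  have hσ : ∀ i ℓ, Continuous fun X : Fin k → EuclideanSpace ℝ (Fin n) => suppF F (X ℓ - a i) :=
    fun i ℓ => (continuous_suppF hF hFb).comp ((continuous_apply ℓ).sub continuous_const)
  exact ((continuous_finsetSum _ fun i _ => continuous_fmin hk fun ℓ => hσ i ℓ).add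
    (continuous_fmin hm fun i => continuous_finsetSum _ fun ℓ _ => hσ i ℓ)).add
    (continuous_const.mul (continuous_finsetSum _ fun ℓ _ => continuous_fmin hm fun i => hσ i ℓ))

lemma exists_pos_mul_norm_sub_le_penalizedObjective (hFb : IsBounded F)
    (hF0 : (0 : EuclideanSpace ℝ (Fin n)) ∈ interior F) (hlam : 0 ≤ lam) :
    ∃ c > 0, ∀ X, c * (‖X‖ - ∑ i, ‖a i‖) ≤ penalizedObjective hm hk a F lam X := by
  obtain ⟨c, hc, hcσ⟩ := exists_pos_mul_norm_le_suppF hFb hF0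
  have hσ : ∀ x, 0 ≤ suppF F x := fun x => (mul_nonneg hc.le (norm_nonneg x)).trans (hcσ x)
  refine ⟨c, hc, fun X => ?_⟩
  have hmid : c * (‖X‖ - ∑ i, ‖a i‖) ≤ fmin hm fun i => ∑ ℓ, suppF F (X ℓ - a i) := by
    refine le_fmin hm fun i => ?_
    have hX : ‖X‖ - ∑ j, ‖a j‖ ≤ ‖X - fun _ => a i‖ := by
      have := norm_sub_norm_le X fun _ => a i
      have := pi_norm_const_le (ι := Fin k) (a i)
      have := Finset.single_le_sum (fun j _ => norm_nonneg (a j)) (Finset.mem_univ i)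
      linarith
    have hXa : ‖X - fun _ => a i‖ ≤ ∑ ℓ, ‖X ℓ - a i‖ :=
      (pi_norm_le_iff_of_nonneg (Finset.sum_nonneg fun ℓ _ => norm_nonneg _)).mpr fun ℓ =>
        Finset.single_le_sum (f := fun ℓ => ‖X ℓ - a i‖) (fun _ _ => norm_nonneg _)
          (Finset.mem_univ ℓ)
    calc c * (‖X‖ - ∑ j, ‖a j‖) ≤ c * ∑ ℓ, ‖X ℓ - a i‖ :=
          mul_le_mul_of_nonneg_left (hX.trans hXa) hc.le
      _ = ∑ ℓ, c * ‖X ℓ - a i‖ := Finset.mul_sum _ _ _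
      _ ≤ ∑ ℓ, suppF F (X ℓ - a i) := Finset.sum_le_sum fun ℓ _ => hcσ _
  have hfirst : 0 ≤ ∑ i, fmin hk fun ℓ => suppF F (X ℓ - a i) :=
    Finset.sum_nonneg fun i _ => le_fmin hk fun ℓ => hσ _
  have hpenalty : 0 ≤ lam * ∑ ℓ, fmin hm fun i => suppF F (X ℓ - a i) :=
    mul_nonneg hlam (Finset.sum_nonneg fun ℓ _ => le_fmin hm fun i => hσ _)
  unfold penalizedObjective
  linarith

lemma tendsto_penalizedObjective_cocompact (hFb : IsBounded F)
    (hF0 : (0 : EuclideanSpace ℝ (Fin n)) ∈ interior F) (hlam : 0 ≤ lam) :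
    Tendsto (penalizedObjective hm hk a F lam) (cocompact _) atTop := by
  obtain ⟨c, hc, hbound⟩ := exists_pos_mul_norm_sub_le_penalizedObjective hm hk a lam hFb hF0 hlam
  exact tendsto_atTop_mono hbound <|
    (tendsto_atTop_add_const_right _ _ tendsto_norm_cocompact_atTop).const_mul_atTop hc

end Objective

theorem stmt_10_general {n m k : ℕ} (hm : 1 ≤ m) (hk : 1 ≤ k)
    (a : Fin m → EuclideanSpace ℝ (Fin n))
    (F : Set (EuclideanSpace ℝ (Fin n)))
    (hFb : Bornology.IsBounded F)
    (hF0 : (0 : EuclideanSpace ℝ (Fin n)) ∈ interior F)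
    (lam : ℝ) (hlam : 0 < lam) :
    ∃ Xbar : Fin k → EuclideanSpace ℝ (Fin n),
      ∀ X : Fin k → EuclideanSpace ℝ (Fin n),
        ∑ i, fmin hk (fun ℓ => suppF F (Xbar ℓ - a i))
            + fmin hm (fun i => ∑ ℓ, suppF F (Xbar ℓ - a i))
            + lam * ∑ ℓ, fmin hm (fun i => suppF F (Xbar ℓ - a i))
          ≤ ∑ i, fmin hk (fun ℓ => suppF F (X ℓ - a i))
            + fmin hm (fun i => ∑ ℓ, suppF F (X ℓ - a i))
            + lam * ∑ ℓ, fmin hm (fun i => suppF F (X ℓ - a i)) :=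
  (continuous_penalizedObjective hm hk a lam ⟨0, interior_subset hF0⟩ hFb).exists_forall_le
    (tendsto_penalizedObjective_cocompact hm hk a lam hFb hF0 hlam.le)

theorem stmt_10 {n m k : ℕ} (hm : 1 ≤ m) (hk : 1 ≤ k)
    (a : Fin m → EuclideanSpace ℝ (Fin n))
    (F : Set (EuclideanSpace ℝ (Fin n)))
    (hF : F.Nonempty) (hFc : IsClosed F) (hFb : Bornology.IsBounded F)
    (hFconv : Convex ℝ F) (hF0 : (0 : EuclideanSpace ℝ (Fin n)) ∈ interior F)
    (lam : ℝ) (hlam : 0 < lam) :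
    ∃ Xbar : Fin k → EuclideanSpace ℝ (Fin n),
      ∀ X : Fin k → EuclideanSpace ℝ (Fin n),
        ∑ i, fmin hk (fun ℓ => suppF F (Xbar ℓ - a i))
            + fmin hm (fun i => ∑ ℓ, suppF F (Xbar ℓ - a i))
            + lam * ∑ ℓ, fmin hm (fun i => suppF F (Xbar ℓ - a i))
          ≤ ∑ i, fmin hk (fun ℓ => suppF F (X ℓ - a i))
            + fmin hm (fun i => ∑ ℓ, suppF F (X ℓ - a i))
            + lam * ∑ ℓ, fmin hm (fun i => suppF F (X ℓ - a i)) :=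
  stmt_10_general hm hk a F hFb hF0 lam hlam
end

section
/- Fix μ > 0, λ > 0, m ≥ 1, k ≥ 1, and nodes a¹,…,a^m ∈ ℝⁿ forming the rows of the m×n matrix 𝐀. Define g_μ(𝐗) = ((1+λ)μ/2) Σ_{i=1}^m Σ_{ℓ=1}^{k+1} ‖(x^ℓ − a^i)/μ‖² + (μ/2) Σ_{ℓ=1}^{k+1} Σ_{j=1}^{k+1} ‖(x^ℓ − x^j)/μ‖² for 𝐗 ∈ ℝ^{(k+1)×n} with rows x^ℓ. Then for every 𝐘 ∈ ℝ^{(k+1)×n}, the equation ∇g_μ(𝐗) = 𝐘 has the unique solution 𝐗 = (α𝕀 + β𝐄)·((1+λ)𝐄₁𝐀 + μ𝐘), where α = 1/(m(λ+1) + 2(k+1)), β = 2/(m(λ+1)·[m(λ+1) + 2(k+1)]), 𝐄 is the (k+1)×(k+1) all-ones matrix, 𝐄₁ the (k+1)×m all-ones matrix, and 𝕀 the identity matrix of size k+1. -/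
/-!
The gradient of the objective at `X` is `μ⁻¹ ((1 + λ)(m X - 𝐄₁𝐀) + 2((k + 1) X - 𝐄 X))`, so
`∇g_μ(X) = Y` is the linear system `c X - 2 𝐄 X = B` with `c = m(1 + λ) + 2(k + 1)` and
`B = (1 + λ)𝐄₁𝐀 + μY`. Summing its rows gives `m(1 + λ) 𝐄 X = 𝐄 B`, which determines `𝐄 X` and
then `X = (B + 2 𝐄 X) / c`; i.e. `(c𝕀 - 2𝐄)⁻¹ = α𝕀 + β𝐄`.
-/

open Finset RealInnerProductSpace

section Gradient

variable {F : Type*} [NormedAddCommGroup F] [InnerProductSpace ℝ F] [CompleteSpace F]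
  {f g : F → ℝ} {f' g' x : F}

theorem HasGradientAt.add (hf : HasGradientAt f f' x) (hg : HasGradientAt g g' x) :
    HasGradientAt (fun y => f y + g y) (f' + g') x := by
  rw [hasGradientAt_iff_hasFDerivAt] at *
  simpa only [map_add] using hf.fun_add hg

theorem HasGradientAt.const_mul (c : ℝ) (hf : HasGradientAt f f' x) :
    HasGradientAt (fun y => c * f y) (c • f') x := by
  rw [hasGradientAt_iff_hasFDerivAt] at *
  simpa only [map_smul] using hf.const_mul c

end Gradient

section PiLp

variable {ι κ E : Type*} [Fintype ι] [Fintype κ]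
  [NormedAddCommGroup E] [InnerProductSpace ℝ E] [CompleteSpace E]

theorem hasGradientAt_piLp_of_hasFDerivAt {f : PiLp 2 (fun _ : ι => E) → ℝ}
    {L : PiLp 2 (fun _ : ι => E) →L[ℝ] ℝ} {G X : PiLp 2 (fun _ : ι => E)}
    (hf : HasFDerivAt f L X) (hL : ∀ v, L v = ∑ ℓ, ⟪G ℓ, v ℓ⟫) :
    HasGradientAt f G X :=
  hasGradientAt_iff_hasFDerivAt.2 <| hf.congr_fderiv <| ContinuousLinearMap.ext fun v => by
    simp [hL, PiLp.inner_apply]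

theorem hasGradientAt_sum_sum_norm_sub_const_sq (a : κ → E) (X : PiLp 2 (fun _ : ι => E)) :
    HasGradientAt (fun Z : PiLp 2 (fun _ : ι => E) => ∑ i, ∑ ℓ, ‖Z ℓ - a i‖ ^ 2)
      (WithLp.toLp 2 fun ℓ => (2 : ℝ) • ((Fintype.card κ : ℝ) • X ℓ - ∑ i, a i)) X := by
  set P := PiLp.proj (𝕜 := ℝ) 2 (fun _ : ι => E)
  have hterm (i : κ) (ℓ : ι) := ((P ℓ).hasFDerivAt (x := X)).sub_const (a i) |>.norm_sq
  refine hasGradientAt_piLp_of_hasFDerivAt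
    (HasFDerivAt.fun_sum fun i _ => HasFDerivAt.fun_sum fun ℓ _ => hterm i ℓ) fun v => ?_
  have hcenter (ℓ : ι) : (Fintype.card κ : ℝ) • X ℓ - ∑ i, a i = ∑ i, (X ℓ - a i) := by
    simp [Finset.sum_sub_distrib, Nat.cast_smul_eq_nsmul]
  simp only [hcenter, real_inner_smul_left, sum_inner]
  simp only [FunLike.coe_sum, Finset.sum_apply, _root_.smul_apply, ContinuousLinearMap.comp_apply,
    innerSL_apply_apply, P, PiLp.proj_apply, nsmul_eq_mul, Nat.cast_ofNat, ← Finset.mul_sum]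
  rw [Finset.sum_comm]

theorem hasGradientAt_sum_sum_norm_sub_sq (X : PiLp 2 (fun _ : ι => E)) :
    HasGradientAt (fun Z : PiLp 2 (fun _ : ι => E) => ∑ ℓ, ∑ j, ‖Z ℓ - Z j‖ ^ 2)
      (WithLp.toLp 2 fun ℓ => (4 : ℝ) • ((Fintype.card ι : ℝ) • X ℓ - ∑ j, X j)) X := by
  set P := PiLp.proj (𝕜 := ℝ) 2 (fun _ : ι => E)
  have hterm (ℓ j : ι) := ((P ℓ).hasFDerivAt (x := X)).sub (P j).hasFDerivAt |>.norm_sq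
  refine hasGradientAt_piLp_of_hasFDerivAt
    (HasFDerivAt.fun_sum fun ℓ _ => HasFDerivAt.fun_sum fun j _ => hterm ℓ j) fun v => ?_
  have hcenter (ℓ : ι) : (Fintype.card ι : ℝ) • X ℓ - ∑ j, X j = ∑ j, (X ℓ - X j) := by
    simp [Finset.sum_sub_distrib, Nat.cast_smul_eq_nsmul]
  -- antisymmetry of `X ℓ - X j` turns the `v j` half of the sum into a copy of the `v ℓ` half
  have hswap : ∑ ℓ, ∑ j, ⟪X ℓ - X j, v j⟫ = -∑ ℓ, ∑ j, ⟪X ℓ - X j, v ℓ⟫ := by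
    rw [Finset.sum_comm]
    simp only [← Finset.sum_neg_distrib, ← inner_neg_left, neg_sub]
  simp only [hcenter, real_inner_smul_left, sum_inner]
  simp only [FunLike.coe_sum, Finset.sum_apply, _root_.smul_apply,
    ContinuousLinearMap.comp_apply, innerSL_apply_apply, Pi.sub_apply, P, PiLp.proj_apply,
    _root_.sub_apply, inner_sub_right, nsmul_eq_mul, mul_sub, Finset.sum_sub_distrib,
    ← Finset.mul_sum]
  linear_combination (-2) * hswap

theorem hasGradientAt_objective (lam : ℝ) {μ : ℝ} (hμ : μ ≠ 0) (a : κ → E)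
    (X : PiLp 2 (fun _ : ι => E)) :
    HasGradientAt
      (fun Z : PiLp 2 (fun _ : ι => E) =>
        ((1 + lam) * μ / 2) * ∑ i, ∑ ℓ, ‖μ⁻¹ • (Z ℓ - a i)‖ ^ 2
          + (μ / 2) * ∑ ℓ, ∑ j, ‖μ⁻¹ • (Z ℓ - Z j)‖ ^ 2)
      (WithLp.toLp 2 fun ℓ => μ⁻¹ • ((1 + lam) • ((Fintype.card κ : ℝ) • X ℓ - ∑ i, a i)
        + (2 : ℝ) • ((Fintype.card ι : ℝ) • X ℓ - ∑ j, X j))) X := by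
  have hscale (w : E) : ‖μ⁻¹ • w‖ ^ 2 = μ⁻¹ ^ 2 * ‖w‖ ^ 2 := by
    rw [norm_smul, mul_pow, Real.norm_eq_abs, sq_abs]
  simp only [hscale, ← Finset.mul_sum, ← mul_assoc]
  convert ((hasGradientAt_sum_sum_norm_sub_const_sq a X).const_mul _).add
    ((hasGradientAt_sum_sum_norm_sub_sq X).const_mul _) using 1
  ext ℓ
  simp only [PiLp.add_apply, PiLp.smul_apply]
  match_scalars <;> field_simp <;> ring

end PiLp

theorem forall_eq_smul_sub_smul_sum_iff {K V ι : Type*} [Field K] [AddCommGroup V] [Module K V]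
    [Fintype ι] {r s : K} (hr : r ≠ 0) (hc : r + s * Fintype.card ι ≠ 0) {B X : ι → V} :
    (∀ ℓ, B ℓ = (r + s * Fintype.card ι) • X ℓ - s • ∑ j, X j) ↔
      X = fun ℓ => (1 / (r + s * Fintype.card ι)) • B ℓ
        + (s / (r * (r + s * Fintype.card ι))) • ∑ j, B j := by
  constructor
  · intro h
    have hsum : ∑ j, B j = r • ∑ j, X j := by
      simp only [h, sum_sub_distrib, ← smul_sum, sum_const, card_univ]
      module
    funext ℓ
    rw [hsum, h ℓ]
    match_scalars <;> field_simp
    ring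
  · rintro rfl ℓ
    simp only [sum_add_distrib, ← smul_sum, sum_const, card_univ]
    match_scalars <;> field_simp
    ring

theorem stmt_17_general {n m k : ℕ} (hm : 1 ≤ m)
    (μ lam : ℝ) (hμ : 0 < μ) (hlam : 0 < lam)
    (a : Fin m → EuclideanSpace ℝ (Fin n))
    (Y X : PiLp 2 fun _ : Fin (k + 1) => EuclideanSpace ℝ (Fin n)) :
    HasGradientAt
        (fun Z : PiLp 2 fun _ : Fin (k + 1) => EuclideanSpace ℝ (Fin n) =>
          ((1 + lam) * μ / 2) * ∑ i, ∑ ℓ, ‖μ⁻¹ • (Z ℓ - a i)‖ ^ 2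
            + (μ / 2) * ∑ ℓ, ∑ j, ‖μ⁻¹ • (Z ℓ - Z j)‖ ^ 2) Y X
      ↔ X = fun ℓ =>
          (1 / ((m : ℝ) * (lam + 1) + 2 * ((k : ℝ) + 1))) •
              ((1 + lam) • (∑ i, a i) + μ • Y ℓ)
            + (2 / ((m : ℝ) * (lam + 1) * ((m : ℝ) * (lam + 1) + 2 * ((k : ℝ) + 1)))) •
              (∑ j, ((1 + lam) • (∑ i, a i) + μ • Y j)) := by
  have hr : (m : ℝ) * (lam + 1) ≠ 0 := by
    have : (1 : ℝ) ≤ m := by exact_mod_cast hm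
    positivity
  have hc : (m : ℝ) * (lam + 1) + 2 * ((k : ℝ) + 1) ≠ 0 := by positivity
  have hgrad := hasGradientAt_objective lam hμ.ne' a X
  have hsolve := forall_eq_smul_sub_smul_sum_iff (s := (2 : ℝ)) (X := X.ofLp)
    (B := fun ℓ => (1 + lam) • (∑ i, a i) + μ • Y ℓ) hr
  simp only [Fintype.card_fin, Nat.cast_add, Nat.cast_one] at hgrad hsolve
  rw [← hsolve hc, show HasGradientAt _ Y X ↔ Y = _ from ⟨(·.unique hgrad), (· ▸ hgrad)⟩,
    PiLp.ext_iff]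
  refine forall_congr' fun ℓ => ?_
  rw [PiLp.toLp_apply, eq_inv_smul_iff₀ hμ.ne']
  constructor <;> intro h <;> linear_combination (norm := module) h

theorem stmt_17 {n m k : ℕ} (hm : 1 ≤ m) (hk : 1 ≤ k)
    (μ lam : ℝ) (hμ : 0 < μ) (hlam : 0 < lam)
    (a : Fin m → EuclideanSpace ℝ (Fin n))
    (Y X : PiLp 2 fun _ : Fin (k + 1) => EuclideanSpace ℝ (Fin n)) :
    HasGradientAt
        (fun Z : PiLp 2 fun _ : Fin (k + 1) => EuclideanSpace ℝ (Fin n) =>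
          ((1 + lam) * μ / 2) * ∑ i, ∑ ℓ, ‖μ⁻¹ • (Z ℓ - a i)‖ ^ 2
            + (μ / 2) * ∑ ℓ, ∑ j, ‖μ⁻¹ • (Z ℓ - Z j)‖ ^ 2) Y X
      ↔ X = fun ℓ =>
          (1 / ((m : ℝ) * (lam + 1) + 2 * ((k : ℝ) + 1))) •
              ((1 + lam) • (∑ i, a i) + μ • Y ℓ)
            + (2 / ((m : ℝ) * (lam + 1) * ((m : ℝ) * (lam + 1) + 2 * ((k : ℝ) + 1)))) •
              (∑ j, ((1 + lam) • (∑ i, a i) + μ • Y j)) :=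
  stmt_17_general hm μ lam hμ hlam a Y X
end
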